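/- Every left ideal of R^{t,x^{p^s}−λ}_Θ has one of the following forms: (i) ⟨0⟩ or ⟨1⟩; (ii) a nontrivial left ideal contained in ⟨u⟩, namely R^{t,x^{p^s}−λ}_Θ(u^{(t−1)−i_1}b_{i_1}(x) − u^{(t−1)−(i_1−1)}g_{i_1}(x)) + … + R^{t,x^{p^s}−λ}_Θ(u^{(t−1)−i_n}b_{i_n}(x) − u^{(t−1)−(i_n−1)}g_{i_n}(x)), where 0 ≤ i_1 < … < i_n ≤ t−2, each b_{i_j}(x) ∈ B_λ^1 with deg b_{i_j}(x) ≤ p^s − 1, each g_{i_j}(x) ∈ R^{t,x^{p^s}−λ}_Θ, and whenever u^{(t−1)−i_j}c(x) + u^{(t−1)−(i_j−1)}g(x) lies in the sum of the generators with indices i_k, …, i_n for some j < k, then b_{i_j}(x) right-divides c(x); (iii) a nontrivial left ideal not contained in ⟨u⟩, of the form R^{t,x^{p^s}−λ}_Θ(b(x) + ug(x)) + I with b(x) ∈ B_λ^1, deg b(x) ≤ p^s − 1, g(x) ∈ R^{t,x^{p^s}−λ}_Θ, and I a left ideal as in (ii) satisfying the same right-divisibility condition. -/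

import Mathlib

/-!
Reduction modulo `u` is a surjection `ρ` from `R^{t,x^{p^s}-λ}_Θ` onto
`F_{p^m}[x,θ]/⟨x^{p^s}-λ₀⟩` with kernel `⟨u⟩`, and `u` is central and nilpotent. For a left
ideal `J` the torsion ideals `Tor_e(J) = ρ {y | u^e y ∈ J}` form an increasing chain of left
ideals of the residue ring. By division with remainder every nonzero left ideal of the residue
ring is generated by the image of a monic right divisor `b_e` of `x^{p^s}-λ₀` of degree
`< p^s`, and in characteristic `p` one has `(λ_{0,0}x-1)^{p^s} = λ₀⁻¹(x^{p^s}-λ₀)`, so `b_e ∈ B_λ¹`.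
Lifting `b_e` into `Tor_e(J)` gives elements `u^e (b_e - u g_e)` of `J`, and a downward
induction on the power of `u` dividing an element of `J` shows that they generate `J`.
Finally `J ≤ ⟨u⟩` exactly when `Tor_0(J) = 0`; otherwise the level-`0` generator is
`b_0 + u g` and the others generate a left ideal of type (ii).
-/

open Polynomial

namespace SkewPaper

variable (p m t : ℕ) [Fact p.Prime]

/-- The finite field `F_{p^m}`. -/
abbrev Fq : Type := GaloisField p m

/-- The finite chain ring `R^t = F_{p^m}[u]/⟨u^t⟩`. -/
abbrev Rt : Type :=
  Polynomial (Fq p m) ⧸ Ideal.span {(Polynomial.X : Polynomial (Fq p m)) ^ t}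

/-- The element `u` of `R^t`. -/
noncomputable def uE : Rt p m t := Ideal.Quotient.mk _ Polynomial.X

/-- The canonical embedding `F_{p^m} → R^t`. -/
noncomputable def eps : Fq p m →+* Rt p m t :=
  (Ideal.Quotient.mk _).comp Polynomial.C

/-- The automorphism `Θ` of `R^t` extending `θ` with `Θ(u) = u`,
i.e. `Θ(a₀ + a₁u + ⋯ + a_{t-1}u^{t-1}) = θ(a₀) + θ(a₁)u + ⋯ + θ(a_{t-1})u^{t-1}`. -/
noncomputable def Th (theta : Fq p m ≃+* Fq p m) : Rt p m t ≃+* Rt p m t :=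
  Ideal.quotientEquiv _ _ (Polynomial.mapEquiv theta) (by
    rw [Ideal.map_span, Set.image_singleton]
    simp [Polynomial.mapEquiv_apply])

/-- Reduction of `R^t` modulo `u`. -/
noncomputable def rdc (ht : 0 < t) : Rt p m t →+* Fq p m :=
  Ideal.Quotient.lift _ (Polynomial.evalRingHom 0) (by
    intro a ha
    rw [Ideal.mem_span_singleton] at ha
    obtain ⟨b, rfl⟩ := ha
    simp [zero_pow ht.ne'])

/-- `a` right-divides `b`, i.e. `b = h * a` for some `h`. -/
def RDvd {A : Type*} [Mul A] (a b : A) : Prop := ∃ h, b = h * a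

/-- The element `Σᵢ ι(cᵢ) X^i` determined by a coefficient family `c`. -/
noncomputable def spoly {R A : Type*} [Semiring R] [Semiring A] (iot : R →+* A) (X : A)
    (c : ℕ →₀ R) : A :=
  c.sum fun i a => iot a * X ^ i

/-- Lift `Σᵢ ι(ε(cᵢ)) X^i` of a skew polynomial over `F_{p^m}` to the skew polynomial ring
over `R^t` (coefficient-wise, via the embedding `F_{p^m} → R^t`). -/
noncomputable def liftP {A : Type*} [Semiring A] (iot : Rt p m t →+* A) (X : A)
    (c : ℕ →₀ Fq p m) : A :=
  c.sum fun i a => iot (eps p m t a) * X ^ i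

/-- `λ = λ₀ + uλ₁ + ⋯ + u^{t-1}λ_{t-1}` as an element of `R^t`. -/
noncomputable def lamOf (lc : ℕ → Fq p m) : Rt p m t :=
  ∑ i ∈ Finset.range t, eps p m t (lc i) * uE p m t ^ i

/-- The order `|Θ|` of `Θ` in the automorphism group of `R^t`. -/
noncomputable def thOrder (theta : Fq p m ≃+* Fq p m) : ℕ :=
  orderOf (G := RingAut (Rt p m t)) (Th p m t theta)

/-- The order `|θ|` of `θ` in the automorphism group of `F_{p^m}`. -/
noncomputable def thetaOrder (theta : Fq p m ≃+* Fq p m) : ℕ :=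
  orderOf (G := RingAut (Fq p m)) theta

/-- The central polynomial `f(x) = Σᵢ fᵢ x^{i·|Θ|}` in the skew polynomial ring. -/
noncomputable def fOf {A : Type*} [Ring A] (theta : Fq p m ≃+* Fq p m)
    (iot : Rt p m t →+* A) (X : A) (fc : ℕ →₀ Rt p m t) : A :=
  fc.sum fun i a => iot a * X ^ (i * thOrder p m t theta)

/-- The image of `u` in the quotient `R^{t,f}_Θ`. -/
noncomputable def uQ {P Q : Type*} [Semiring P] [Semiring Q] (iot : Rt p m t →+* P)
    (piQ : P →+* Q) : Q :=
  piQ (iot (uE p m t))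

/-- The image in `R^{t,f}_Θ` of the lift of a skew polynomial over `F_{p^m}`. -/
noncomputable def lQ {P Q : Type*} [Semiring P] [Semiring Q] (iot : Rt p m t →+* P) (X : P)
    (piQ : P →+* Q) (c : ℕ →₀ Fq p m) : Q :=
  piQ (liftP p m t iot X c)

/-- The class in `F_{p^m}[x,θ]/⟨f̄⟩` of the skew polynomial with coefficients `c`. -/
noncomputable def lQf {Pf Qf : Type*} [Semiring Pf] [Semiring Qf] (iotf : Fq p m →+* Pf)
    (Xf : Pf) (pif : Pf →+* Qf) (c : ℕ →₀ Fq p m) : Qf :=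
  pif (spoly iotf Xf c)

/-- `b(x)` right-divides `c(x)` in the quotient `F_{p^m}[x,θ]/⟨f̄⟩`. -/
def RDvdC {Pf Qf : Type*} [Semiring Pf] [Semiring Qf] (iotf : Fq p m →+* Pf) (Xf : Pf)
    (pif : Pf →+* Qf) (b c : ℕ →₀ Fq p m) : Prop :=
  ∃ h : Qf, lQf p m iotf Xf pif c = h * lQf p m iotf Xf pif b

/-- Membership in `B_w`: representative of degree `≤ D - 1` which right-divides `w`. -/
def InB {Pf : Type*} [Semiring Pf] (iotf : Fq p m →+* Pf) (Xf : Pf) (w : Pf) (D : ℕ)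
    (c : ℕ →₀ Fq p m) : Prop :=
  (∀ i, D ≤ i → c i = 0) ∧ RDvd (spoly iotf Xf c) w

/-- `deg c < deg d` for coefficient families. -/
def degLt {R : Type*} [Zero R] (c d : ℕ →₀ R) : Prop := c.support.max < d.support.max

/-- "Type (ii)" left ideals of `R^{t,f}_Θ`: those of the form
`Σⱼ R (u^{(t-1)-i_j} b_{i_j}(x) - u^{(t-1)-(i_j-1)} g_{i_j}(x))` with
`0 ≤ i₁ < ⋯ < i_n ≤ t-2`, `b_{i_j} ∈ B_w` of degree `≤ D - 1`, together with the
right-divisibility side condition. -/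
def TypeTwo (p m t : ℕ) [Fact p.Prime] {P Pf Q Qf : Type*} [Ring P] [Ring Pf] [Ring Q] [Ring Qf]
    (iot : Rt p m t →+* P) (Xp : P) (piQ : P →+* Q)
    (iotf : Fq p m →+* Pf) (Xf : Pf) (pif : Pf →+* Qf)
    (w : Pf) (D : ℕ) (J : Ideal Q) : Prop :=
  ∃ (n : ℕ) (idx : Fin n → ℕ) (bcs : Fin n → (ℕ →₀ Fq p m)) (gs : Fin n → Q),
    StrictMono idx ∧ (∀ j, idx j ≤ t - 2) ∧ (∀ j, InB p m iotf Xf w D (bcs j)) ∧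
    J = Submodule.span Q (Set.range fun j : Fin n =>
        uQ p m t iot piQ ^ (t - 1 - idx j) * lQ p m t iot Xp piQ (bcs j)
          - uQ p m t iot piQ ^ (t - idx j) * gs j) ∧
    ∀ (j k : Fin n), j < k → ∀ (cc : ℕ →₀ Fq p m) (g : Q),
      uQ p m t iot piQ ^ (t - 1 - idx j) * lQ p m t iot Xp piQ cc
          + uQ p m t iot piQ ^ (t - idx j) * g ∈
        Submodule.span Q ((fun l : Fin n =>
          uQ p m t iot piQ ^ (t - 1 - idx l) * lQ p m t iot Xp piQ (bcs l)
            - uQ p m t iot piQ ^ (t - idx l) * gs l) '' {l | k ≤ l}) →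
      RDvdC p m iotf Xf pif (bcs j) cc


section SkewPolynomial

variable {R A : Type*} [Semiring R] [Semiring A]

structure IsSkewPolynomialRing (θ : R ≃+* R) (ι : R →+* A) (X : A) : Prop where
  X_mul : ∀ a, X * ι a = ι (θ a) * X
  existsUnique_spoly : ∀ g : A, ∃! c : ℕ →₀ R, g = spoly ι X c

variable (ι : R →+* A) (X : A)

noncomputable def spolyHom : (ℕ →₀ R) →+ A :=
  Finsupp.liftAddHom fun i => (AddMonoidHom.mulRight (X ^ i)).comp ι.toAddMonoidHom

theorem spolyHom_apply (c : ℕ →₀ R) : spolyHom ι X c = spoly ι X c :=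
  Finsupp.liftAddHom_apply _ _

theorem spoly_zero : spoly ι X 0 = 0 :=
  Finsupp.sum_zero_index

theorem spoly_add (c d : ℕ →₀ R) : spoly ι X (c + d) = spoly ι X c + spoly ι X d := by
  simp only [← spolyHom_apply, map_add]

theorem spoly_single (i : ℕ) (a : R) : spoly ι X (Finsupp.single i a) = ι a * X ^ i :=
  Finsupp.sum_single_index (by simp)

theorem spoly_smul (a : R) (c : ℕ →₀ R) : spoly ι X (a • c) = ι a * spoly ι X c := by
  rw [spoly, spoly, Finsupp.sum_smul_index (by simp), Finsupp.mul_sum]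
  exact Finsupp.sum_congr fun i _ => by rw [map_mul, mul_assoc]

variable {ι X} {θ : R ≃+* R}

theorem X_pow_mul (hX : ∀ a, X * ι a = ι (θ a) * X) (i : ℕ) (a : R) :
    X ^ i * ι a = ι (θ^[i] a) * X ^ i := by
  induction i generalizing a with
  | zero => simp
  | succ n ih =>
    rw [pow_succ, mul_assoc, hX, ← mul_assoc, ih, Function.iterate_succ_apply, mul_assoc]

theorem monomial_mul_monomial (hX : ∀ a, X * ι a = ι (θ a) * X) (i j : ℕ) (a b : R) :
    ι a * X ^ i * (ι b * X ^ j) = ι (a * θ^[i] b) * X ^ (i + j) := by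
  rw [mul_assoc, ← mul_assoc (X ^ i), X_pow_mul hX, map_mul, pow_add]
  simp only [mul_assoc]

theorem mul_pow_of_fixed (hX : ∀ a, X * ι a = ι (θ a) * X) {a : R} (ha : θ a = a) (k : ℕ) :
    (ι a * X) ^ k = ι (a ^ k) * X ^ k := by
  induction k with
  | zero => simp
  | succ n ih =>
    rw [pow_succ, ih]
    calc ι (a ^ n) * X ^ n * (ι a * X) = ι (a ^ n) * X ^ n * (ι a * X ^ 1) := by rw [pow_one]
      _ = ι (a ^ (n + 1)) * X ^ (n + 1) := by
        rw [monomial_mul_monomial hX, Function.iterate_fixed ha, ← pow_succ]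

variable (θ) in
noncomputable def skewMul (c d : ℕ →₀ R) : ℕ →₀ R :=
  c.sum fun i a => d.sum fun j b => Finsupp.single (i + j) (a * θ^[i] b)

theorem spoly_skewMul (hX : ∀ a, X * ι a = ι (θ a) * X) (c d : ℕ →₀ R) :
    spoly ι X (skewMul θ c d) = spoly ι X c * spoly ι X d := by
  rw [skewMul, ← spolyHom_apply, map_finsuppSum]
  simp_rw [map_finsuppSum, spolyHom_apply, spoly_single]
  rw [spoly, Finsupp.sum_mul]
  refine Finsupp.sum_congr fun i _ => ?_
  rw [spoly, Finsupp.mul_sum]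
  exact Finsupp.sum_congr fun j _ => (monomial_mul_monomial hX i j _ _).symm

theorem skewMul_single_apply_add (n : ℕ) (a : R) (b : ℕ →₀ R) (j : ℕ) :
    skewMul θ (Finsupp.single n a) b (n + j) = a * θ^[n] (b j) := by
  rw [skewMul, Finsupp.sum_single_index (by simp), Finsupp.sum_apply, Finsupp.sum,
    Finset.sum_eq_single j]
  · simp
  · intro k _ hk
    simp [hk]
  · intro hj
    simp [Finsupp.notMem_support_iff.mp hj]

end SkewPolynomial

theorem mapRange_skewMul {R R' : Type*} [Semiring R] [Semiring R'] {θ : R ≃+* R}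
    {θ' : R' ≃+* R'} (φ : R →+* R') (hφ : ∀ r, φ (θ r) = θ' (φ r)) (c d : ℕ →₀ R) :
    (skewMul θ c d).mapRange φ φ.map_zero
      = skewMul θ' (c.mapRange φ φ.map_zero) (d.mapRange φ φ.map_zero) := by
  have hφn (n : ℕ) (r : R) : φ (θ^[n] r) = θ'^[n] (φ r) :=
    Function.Semiconj.iterate_right (f := φ) hφ n r
  rw [skewMul, skewMul, Finsupp.sum_mapRange_index (by simp), Finsupp.sum,
    Finsupp.mapRange_finsetSum]
  refine Finset.sum_congr rfl fun i _ => ?_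
  dsimp only
  rw [Finsupp.sum_mapRange_index (by simp), Finsupp.sum, Finsupp.mapRange_finsetSum]
  refine Finset.sum_congr rfl fun j _ => ?_
  rw [Finsupp.mapRange_single, map_mul, hφn]

namespace IsSkewPolynomialRing

variable {R A : Type*} [Semiring R] [Semiring A] {θ : R ≃+* R} {ι : R →+* A} {X : A}
  (hA : IsSkewPolynomialRing θ ι X)
include hA

theorem spoly_injective : Function.Injective (spoly ι X) := fun _ d h =>
  (hA.existsUnique_spoly (spoly ι X d)).unique h.symm rfl

noncomputable def coeffs (g : A) : ℕ →₀ R := (hA.existsUnique_spoly g).exists.choose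

theorem spoly_coeffs (g : A) : spoly ι X (hA.coeffs g) = g :=
  (hA.existsUnique_spoly g).exists.choose_spec.symm

theorem coeffs_spoly (c : ℕ →₀ R) : hA.coeffs (spoly ι X c) = c :=
  hA.spoly_injective (hA.spoly_coeffs _)

theorem nontrivial [Nontrivial R] : Nontrivial A := by
  refine ⟨⟨1, 0, fun h => one_ne_zero (Finsupp.single_eq_zero.mp
    (hA.spoly_injective (a₁ := Finsupp.single 0 1) (a₂ := 0) ?_))⟩⟩
  rw [spoly_single, spoly_zero, map_one, pow_zero, mul_one, h]

theorem coeffs_mul (g h : A) : hA.coeffs (g * h) = skewMul θ (hA.coeffs g) (hA.coeffs h) := by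
  rw [← hA.coeffs_spoly (skewMul θ _ _), spoly_skewMul hA.X_mul, hA.spoly_coeffs, hA.spoly_coeffs]

theorem coeffs_add (g h : A) : hA.coeffs (g + h) = hA.coeffs g + hA.coeffs h := by
  rw [← hA.coeffs_spoly (_ + _), spoly_add, hA.spoly_coeffs, hA.spoly_coeffs]

variable {R' A' : Type*} [Semiring R'] [Semiring A'] {θ' : R' ≃+* R'} {ι' : R' →+* A'} {X' : A'}
  (φ : R →+* R') (hφ : ∀ r, φ (θ r) = θ' (φ r)) (hX' : ∀ a, X' * ι' a = ι' (θ' a) * X')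

noncomputable def map : A →+* A' where
  toFun g := spoly ι' X' ((hA.coeffs g).mapRange φ φ.map_zero)
  map_one' := by
    have h1 : (1 : A) = spoly ι X (Finsupp.single 0 1) := by
      rw [spoly_single, map_one, pow_zero, mul_one]
    rw [h1, hA.coeffs_spoly, Finsupp.mapRange_single, map_one, spoly_single, map_one, pow_zero,
      mul_one]
  map_mul' g h := by
    simp only [hA.coeffs_mul, mapRange_skewMul φ hφ, spoly_skewMul hX']
  map_zero' := by
    rw [← spoly_zero ι X, hA.coeffs_spoly, Finsupp.mapRange_zero, spoly_zero]
  map_add' g h := by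
    simp only [hA.coeffs_add, Finsupp.mapRange_add (map_add φ), spoly_add]

theorem map_spoly (c : ℕ →₀ R) :
    hA.map φ hφ hX' (spoly ι X c) = spoly ι' X' (c.mapRange φ φ.map_zero) := by
  rw [map, RingHom.coe_mk, MonoidHom.coe_mk, OneHom.coe_mk, hA.coeffs_spoly]

theorem map_apply_ι (r : R) : hA.map φ hφ hX' (ι r) = ι' (φ r) := by
  have h := hA.map_spoly φ hφ hX' (Finsupp.single 0 r)
  rwa [Finsupp.mapRange_single, spoly_single, spoly_single, pow_zero, pow_zero, mul_one,
    mul_one] at h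

theorem map_apply_X : hA.map φ hφ hX' X = X' := by
  have h := hA.map_spoly φ hφ hX' (Finsupp.single 1 1)
  rwa [Finsupp.mapRange_single, spoly_single, spoly_single, pow_one, pow_one, map_one, map_one,
    map_one, one_mul, one_mul] at h

end IsSkewPolynomialRing

section Division

variable {R A : Type*} [Ring R] [Ring A] {θ : R ≃+* R} {ι : R →+* A} {X : A}

def IsMonicOfDegree (b : ℕ →₀ R) (D : ℕ) : Prop := b D = 1 ∧ ∀ i, D < i → b i = 0

theorem exists_forall_le_apply_eq_zero (c : ℕ →₀ R) : ∃ n, ∀ i, n ≤ i → c i = 0 := by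
  obtain ⟨n, hn⟩ := Finset.exists_nat_subset_range c.support
  exact ⟨n, fun i hi => Finsupp.notMem_support_iff.mp fun h => by
    have := Finset.mem_range.mp (hn h); omega⟩

theorem exists_spoly_eq_mul_add (hX : ∀ a, X * ι a = ι (θ a) * X) {b : ℕ →₀ R} {D : ℕ}
    (hb : IsMonicOfDegree b D) (c : ℕ →₀ R) :
    ∃ (q : A) (r : ℕ →₀ R), spoly ι X c = q * spoly ι X b + spoly ι X r ∧
      ∀ i, D ≤ i → r i = 0 := by
  obtain ⟨n, hn⟩ := exists_forall_le_apply_eq_zero c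
  induction n generalizing c with
  | zero => exact ⟨0, c, by rw [zero_mul, zero_add], fun i _ => hn i (Nat.zero_le i)⟩
  | succ k ih =>
    by_cases hkD : k < D
    · exact ⟨0, c, by rw [zero_mul, zero_add], fun i hi => hn i (by omega)⟩
    -- subtract `c k X^(k - D) * b` to kill the coefficient of `X^k`
    set e := skewMul θ (Finsupp.single (k - D) (c k)) b
    have he (j : ℕ) : e (k - D + j) = c k * θ^[k - D] (b j) := skewMul_single_apply_add _ _ _ j
    have hce : ∀ i, k ≤ i → (c - e) i = 0 := by
      intro i hi
      obtain ⟨j, rfl⟩ : ∃ j, i = k - D + j := ⟨i - (k - D), by omega⟩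
      rw [Finsupp.sub_apply, he]
      rcases hi.eq_or_lt with hik | hik
      · rw [← hik, show j = D by omega, hb.1, Function.iterate_fixed (map_one θ), mul_one, sub_self]
      · rw [hn _ hik, hb.2 j (by omega), Function.iterate_fixed (map_zero θ), mul_zero, sub_zero]
    obtain ⟨q, r, hqr, hr⟩ := ih (c - e) hce
    refine ⟨q + ι (c k) * X ^ (k - D), r, ?_, hr⟩
    rw [← sub_add_cancel c e, spoly_add, hqr, spoly_skewMul hX, spoly_single]
    noncomm_ring

end Division

section LeftIdeals

variable {R A : Type*} [DivisionRing R] [Ring A] {θ : R ≃+* R} {ι : R →+* A} {X : A}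
  (hA : IsSkewPolynomialRing θ ι X)
include hA

theorem exists_isMonicOfDegree_span_eq (M : Ideal A) {n : ℕ}
    (hM : ∃ c ≠ 0, (∀ i, n ≤ i → c i = 0) ∧ spoly ι X c ∈ M) :
    ∃ b D, D < n ∧ IsMonicOfDegree b D ∧ M = Ideal.span {spoly ι X b} := by
  classical
  have hex : ∃ k, ∃ c ≠ 0, (∀ i, k ≤ i → c i = 0) ∧ spoly ι X c ∈ M := ⟨n, hM⟩
  obtain ⟨c, hc0, hc, hcM⟩ := Nat.find_spec hex
  set k := Nat.find hex
  have hkn : k ≤ n := Nat.find_min' hex hM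
  have hk0 : k ≠ 0 := fun h => hc0 (Finsupp.ext fun i => hc i (by omega))
  have hck : c (k - 1) ≠ 0 := fun h =>
    Nat.find_min hex (show k - 1 < k by omega) ⟨c, hc0, fun i hi => by
      rcases hi.eq_or_lt with rfl | hi
      · exact h
      · exact hc i (by omega), hcM⟩
  set b := (c (k - 1))⁻¹ • c
  have hb : IsMonicOfDegree b (k - 1) :=
    ⟨by simp [b, inv_mul_cancel₀ hck], fun i hi => by simp [b, hc i (by omega)]⟩
  have hbM : spoly ι X b ∈ M := by
    rw [spoly_smul]
    exact M.mul_mem_left _ hcM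
  refine ⟨b, k - 1, by omega, hb, le_antisymm (fun g hg => ?_) ?_⟩
  · obtain ⟨q, r, hqr, hr⟩ := exists_spoly_eq_mul_add hA.X_mul hb (hA.coeffs g)
    rw [hA.spoly_coeffs] at hqr
    have hrM : spoly ι X r ∈ M := by
      rw [eq_sub_of_add_eq' hqr.symm]
      exact M.sub_mem hg (M.mul_mem_left _ hbM)
    have hr0 : r = 0 := by
      by_contra hr0
      exact Nat.find_min hex (show k - 1 < k by omega) ⟨r, hr0, hr, hrM⟩
    rw [hr0, spoly_zero, add_zero] at hqr
    exact Ideal.mem_span_singleton'.mpr ⟨q, hqr.symm⟩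
  · rw [Ideal.span_le, Set.singleton_subset_iff]
    exact hbM

theorem exists_span_eq_of_ne_bot {f : ℕ →₀ R} {D : ℕ} (hf : IsMonicOfDegree f D)
    {Qf : Type*} [Ring Qf] {π : A →+* Qf} (hπ : Function.Surjective π)
    (hker : RingHom.ker π = Ideal.span {spoly ι X f}) {L : Ideal Qf} (hL : L ≠ ⊥) :
    ∃ b : ℕ →₀ R, (∀ i, D ≤ i → b i = 0) ∧ (∃ h, spoly ι X f = h * spoly ι X b) ∧
      L = Ideal.span {π (spoly ι X b)} := by
  obtain ⟨y, hyL, hy0⟩ := Submodule.exists_mem_ne_zero_of_ne_bot hL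
  obtain ⟨g, rfl⟩ := hπ y
  have hπf : π (spoly ι X f) = 0 := by
    rw [← RingHom.mem_ker, hker]
    exact Ideal.mem_span_singleton_self _
  obtain ⟨q, r, hqr, hr⟩ := exists_spoly_eq_mul_add hA.X_mul hf (hA.coeffs g)
  have hπr : π (spoly ι X r) = π g := by
    rw [← hA.spoly_coeffs g, hqr, map_add, map_mul, hπf, mul_zero, zero_add]
  have hr0 : r ≠ 0 := by
    rintro rfl
    rw [spoly_zero, map_zero] at hπr
    exact hy0 hπr.symm
  obtain ⟨b, D', hD', hb, hM⟩ := exists_isMonicOfDegree_span_eq hA (L.comap π)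
    ⟨r, hr0, hr, by rwa [Ideal.mem_comap, hπr]⟩
  have hfM : spoly ι X f ∈ L.comap π := by
    rw [Ideal.mem_comap, hπf]
    exact L.zero_mem
  rw [hM, Ideal.mem_span_singleton'] at hfM
  obtain ⟨h, hh⟩ := hfM
  refine ⟨b, fun i hi => hb.2 i (by omega), ⟨h, hh.symm⟩, ?_⟩
  rw [← Ideal.map_comap_of_surjective π hπ L, hM, Ideal.map_span, Set.image_singleton]

end LeftIdeals

section TorsionIdeals

variable {Q S : Type*} [Ring Q] [Ring S]

theorem le_span_of_forall_pow_mul {u : Q} {n : ℕ} (hn : u ^ n = 0) {J : Ideal Q} {G : Set Q}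
    (hGJ : Submodule.span Q G ≤ J)
    (hstep : ∀ k < n, ∀ w, u ^ k * w ∈ J →
      ∃ g a, w = g + u * a ∧ u ^ k * g ∈ Submodule.span Q G) :
    J ≤ Submodule.span Q G := by
  suffices h : ∀ d w, u ^ (n - d) * w ∈ J → u ^ (n - d) * w ∈ Submodule.span Q G by
    intro z hz
    simpa using h n z (by simpa using hz)
  intro d
  induction d with
  | zero =>
    intro w _
    rw [Nat.sub_zero, hn, zero_mul]
    exact zero_mem _
  | succ d ih =>
    intro w hw
    by_cases hdn : n ≤ d
    · rw [show n - (d + 1) = n - d by omega] at hw ⊢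
      exact ih w hw
    obtain ⟨g, a, rfl, hg⟩ := hstep (n - (d + 1)) (by omega) w hw
    have hk : n - d = n - (d + 1) + 1 := by omega
    have hua : u ^ (n - d) * a = u ^ (n - (d + 1)) * (g + u * a) - u ^ (n - (d + 1)) * g := by
      rw [hk, pow_succ, mul_add, mul_assoc]
      abel
    rw [mul_add, ← mul_assoc, ← pow_succ, ← hk]
    exact add_mem hg (ih a (by rw [hua]; exact J.sub_mem hw (hGJ hg)))

variable (ρ : Q →+* S) (u : Q)

/-- The `e`-th torsion ideal `Tor_e(J) = ρ {y | y u^e ∈ J}` of a left ideal `J`. -/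
def torsionIdeal (J : Ideal Q) (e : ℕ) : Ideal S :=
  Ideal.map ρ (Submodule.comap (LinearMap.mulRight Q (u ^ e)) J)

variable {ρ u} (hρ : Function.Surjective ρ) (hu : ∀ z, Commute u z)
  (hker : RingHom.ker ρ = Ideal.span {u})

include hρ hu in
theorem mem_torsionIdeal {J : Ideal Q} {e : ℕ} {x : S} :
    x ∈ torsionIdeal ρ u J e ↔ ∃ y, u ^ e * y ∈ J ∧ ρ y = x := by
  rw [torsionIdeal, Ideal.mem_map_iff_of_surjective ρ hρ]
  refine exists_congr fun y => ?_
  rw [Submodule.mem_comap, LinearMap.mulRight_apply, ((hu y).pow_left e).eq]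

include hρ hu in
theorem torsionIdeal_mono (J : Ideal Q) : Monotone (torsionIdeal ρ u J) :=
  monotone_nat_of_le_succ fun e x hx => by
    obtain ⟨y, hy, rfl⟩ := (mem_torsionIdeal hρ hu).mp hx
    refine (mem_torsionIdeal hρ hu).mpr ⟨y, ?_, rfl⟩
    rw [pow_succ', mul_assoc]
    exact J.mul_mem_left u hy

include hker in
theorem torsionIdeal_zero_eq_bot_iff (J : Ideal Q) :
    torsionIdeal ρ u J 0 = ⊥ ↔ J ≤ Ideal.span {u} := by
  rw [torsionIdeal, pow_zero, LinearMap.mulRight_one, Submodule.comap_id,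
    Ideal.map_eq_bot_iff_le_ker, hker]

include hρ hu hker in
theorem exists_torsionIdeal_ne_bot {n : ℕ} (hn : u ^ n = 0) {J : Ideal Q} (hJ : J ≠ ⊥) :
    ∃ e < n, torsionIdeal ρ u J e ≠ ⊥ := by
  classical
  obtain ⟨z, hzJ, hz0⟩ := Submodule.exists_mem_ne_zero_of_ne_bot hJ
  have hzn : ¬∃ w, z = u ^ n * w := fun ⟨w, hw⟩ => hz0 (by rw [hw, hn, zero_mul])
  have hex : ∃ k, ¬∃ w, z = u ^ k * w := ⟨n, hzn⟩
  -- write `z = u ^ k * w` with `k` maximal, so that `w ∉ (u)`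
  have hfind := Nat.find_spec hex
  have hkn := Nat.find_min' hex hzn
  obtain ⟨k, hk⟩ : ∃ k, Nat.find hex = k + 1 :=
    Nat.exists_eq_succ_of_ne_zero fun h => hfind ⟨z, by rw [h, pow_zero, one_mul]⟩
  obtain ⟨w, hw⟩ := not_not.mp (Nat.find_min hex (show k < Nat.find hex by omega))
  rw [hk] at hfind
  refine ⟨k, by omega, fun hbot => hfind ?_⟩
  have hρw : ρ w ∈ torsionIdeal ρ u J k := (mem_torsionIdeal hρ hu).mpr ⟨w, hw ▸ hzJ, rfl⟩
  rw [hbot, Ideal.mem_bot, ← RingHom.mem_ker, hker, Ideal.mem_span_singleton'] at hρw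
  obtain ⟨a, rfl⟩ := hρw
  exact ⟨a, by rw [hw, ← (hu a).eq, ← mul_assoc, ← pow_succ]⟩

include hρ hu hker in
theorem exists_forall_torsionIdeal_ne_bot_iff {n : ℕ} (hn : u ^ n = 0) {J : Ideal Q}
    (hJ : J ≠ ⊥) : ∃ e₀ < n, ∀ e, torsionIdeal ρ u J e ≠ ⊥ ↔ e₀ ≤ e := by
  classical
  obtain ⟨e, hen, hne⟩ := exists_torsionIdeal_ne_bot hρ hu hker hn hJ
  have hex : ∃ e, torsionIdeal ρ u J e ≠ ⊥ := ⟨e, hne⟩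
  refine ⟨Nat.find hex, (Nat.find_min' hex hne).trans_lt hen, fun e =>
    ⟨Nat.find_min' hex, fun he hbot => Nat.find_spec hex ?_⟩⟩
  exact eq_bot_mono (torsionIdeal_mono hρ hu J he) hbot

include hρ hu hker in
theorem eq_span_of_torsionIdeal {n : ℕ} (hn : u ^ n = 0) {J : Ideal Q} {E : Set ℕ} {y : ℕ → Q}
    (hyJ : ∀ e ∈ E, u ^ e * y e ∈ J)
    (hE : ∀ e < n, torsionIdeal ρ u J e ≠ ⊥ →
      e ∈ E ∧ torsionIdeal ρ u J e ≤ Ideal.span {ρ (y e)}) :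
    J = Submodule.span Q ((fun e => u ^ e * y e) '' E) := by
  have hGJ : Submodule.span Q ((fun e => u ^ e * y e) '' E) ≤ J :=
    Submodule.span_le.mpr (Set.image_subset_iff.mpr hyJ)
  refine le_antisymm (le_span_of_forall_pow_mul hn hGJ fun k hk w hw => ?_) hGJ
  have hρw : ρ w ∈ torsionIdeal ρ u J k := (mem_torsionIdeal hρ hu).mpr ⟨w, hw, rfl⟩
  obtain ⟨g, hg, hρg⟩ : ∃ g, u ^ k * g ∈ Submodule.span Q ((fun e => u ^ e * y e) '' E) ∧
      ρ (w - g) = 0 := by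
    by_cases hbot : torsionIdeal ρ u J k = ⊥
    · rw [hbot, Ideal.mem_bot] at hρw
      exact ⟨0, by rw [mul_zero]; exact zero_mem _, by rw [sub_zero, hρw]⟩
    obtain ⟨hkE, hle⟩ := hE k hk hbot
    obtain ⟨a, ha⟩ := Ideal.mem_span_singleton'.mp (hle hρw)
    obtain ⟨h, rfl⟩ := hρ a
    refine ⟨h * y k, ?_, by rw [map_sub, map_mul, ha, sub_self]⟩
    rw [← mul_assoc, ((hu h).pow_left k).eq, mul_assoc]
    exact Submodule.smul_mem _ h (Submodule.subset_span ⟨k, hkE, rfl⟩)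
  rw [← RingHom.mem_ker, hker, Ideal.mem_span_singleton'] at hρg
  obtain ⟨a, ha⟩ := hρg
  exact ⟨g, a, by rw [(hu a).eq, ha, add_sub_cancel], hg⟩

end TorsionIdeals

section ChainRing

variable {p m t}

theorem uE_pow_t : uE p m t ^ t = 0 := by
  rw [uE, ← map_pow, Ideal.Quotient.eq_zero_iff_mem]
  exact Ideal.subset_span rfl

theorem rdc_mk (ht : 0 < t) (g : (Fq p m)[X]) :
    rdc p m t ht (Ideal.Quotient.mk _ g) = g.coeff 0 := by
  simp [rdc, Polynomial.coeff_zero_eq_eval_zero]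

theorem rdc_eps (ht : 0 < t) (a : Fq p m) : rdc p m t ht (eps p m t a) = a := by
  simp [eps, rdc_mk]

theorem rdc_uE (ht : 0 < t) : rdc p m t ht (uE p m t) = 0 := by
  simp [uE, rdc_mk]

theorem eq_uE_mul_of_rdc_eq_zero (ht : 0 < t) {r : Rt p m t} (h : rdc p m t ht r = 0) :
    ∃ r', r = uE p m t * r' := by
  obtain ⟨g, rfl⟩ := Ideal.Quotient.mk_surjective r
  rw [rdc_mk] at h
  obtain ⟨g', rfl⟩ := Polynomial.X_dvd_iff.mpr h
  exact ⟨Ideal.Quotient.mk _ g', map_mul _ _ _⟩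

variable (theta : Fq p m ≃+* Fq p m)

theorem Th_mk (g : (Fq p m)[X]) :
    Th p m t theta (Ideal.Quotient.mk _ g) = Ideal.Quotient.mk _ (g.map theta) :=
  Ideal.quotientEquiv_mk _ _ _ _ _

theorem Th_uE : Th p m t theta (uE p m t) = uE p m t := by
  simp [uE, Th_mk]

theorem rdc_Th (ht : 0 < t) (r : Rt p m t) :
    rdc p m t ht (Th p m t theta r) = theta (rdc p m t ht r) := by
  obtain ⟨g, rfl⟩ := Ideal.Quotient.mk_surjective r
  rw [Th_mk, rdc_mk, rdc_mk, Polynomial.coeff_map]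
  rfl

theorem rdc_lamOf (ht : 0 < t) (lc : ℕ → Fq p m) : rdc p m t ht (lamOf p m t lc) = lc 0 := by
  rw [lamOf, map_sum, Finset.sum_eq_single_of_mem 0 (Finset.mem_range.mpr ht)]
  · rw [map_mul, rdc_eps, pow_zero, map_one, mul_one]
  · intro i _ hi
    rw [map_mul, map_pow, rdc_uE, zero_pow hi, mul_zero]

theorem theta_lc_zero (ht : 0 < t) {lc : ℕ → Fq p m}
    (h : Th p m t theta (lamOf p m t lc) = lamOf p m t lc) : theta (lc 0) = lc 0 := by
  simpa only [rdc_Th, rdc_lamOf] using congrArg (rdc p m t ht) h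

end ChainRing

section Reduction

variable {p m t} {s : ℕ} {theta : Fq p m ≃+* Fq p m}
  {P : Type*} [Ring P] {iot : Rt p m t →+* P} {Xp : P}
  {Pf : Type*} [Ring Pf] {iotf : Fq p m →+* Pf} {Xf : Pf}
  {Q : Type*} [Ring Q] {piQ : P →+* Q} {Qf : Type*} [Ring Qf] {pif : Pf →+* Qf}

theorem commute_iot_uE (hP : IsSkewPolynomialRing (Th p m t theta) iot Xp) (g : P) :
    Commute (iot (uE p m t)) g := by
  rw [← hP.spoly_coeffs g, spoly, Finsupp.sum]
  refine Commute.sum_right _ _ _ fun i _ => ((Commute.all _ _).map iot).mul_right ?_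
  rw [Commute, SemiconjBy, X_pow_mul hP.X_mul, Function.iterate_fixed (Th_uE theta)]

theorem commute_uQ (hP : IsSkewPolynomialRing (Th p m t theta) iot Xp)
    (hpiQ : Function.Surjective piQ) (z : Q) : Commute (uQ p m t iot piQ) z := by
  obtain ⟨g, rfl⟩ := hpiQ z
  exact (commute_iot_uE hP g).map piQ

theorem uQ_pow_t : uQ p m t iot piQ ^ t = 0 := by
  rw [uQ, ← map_pow, ← map_pow, uE_pow_t, map_zero, map_zero]

theorem exists_reduction (ht : 0 < t) (hP : IsSkewPolynomialRing (Th p m t theta) iot Xp)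
    (hPf : IsSkewPolynomialRing theta iotf Xf) :
    ∃ σ : P →+* Pf, Function.Surjective σ ∧ (∀ g, σ g = 0 → ∃ g', g = iot (uE p m t) * g') ∧
      (∀ r, σ (iot r) = iotf (rdc p m t ht r)) ∧ σ Xp = Xf ∧
      ∀ c, σ (liftP p m t iot Xp c) = spoly iotf Xf c := by
  set σ := hP.map (rdc p m t ht) (rdc_Th theta ht) hPf.X_mul
  have hσι (r : Rt p m t) : σ (iot r) = iotf (rdc p m t ht r) := hP.map_apply_ι _ _ _ r
  have hσX : σ Xp = Xf := hP.map_apply_X _ _ _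
  have hσl (c : ℕ →₀ Fq p m) : σ (liftP p m t iot Xp c) = spoly iotf Xf c := by
    rw [liftP, map_finsuppSum]
    exact Finsupp.sum_congr fun i _ => by rw [map_mul, map_pow, hσι, hσX, rdc_eps]
  refine ⟨σ, fun g => ⟨_, hσl (hPf.coeffs g) |>.trans (hPf.spoly_coeffs g)⟩, fun g hg => ?_,
    hσι, hσX, hσl⟩
  set c := hP.coeffs g
  have hc : ∀ i, rdc p m t ht (c i) = 0 := by
    rw [← hP.spoly_coeffs g, hP.map_spoly, ← spoly_zero iotf Xf] at hg
    exact fun i => by simpa using DFunLike.congr_fun (hPf.spoly_injective hg) i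
  choose d hd using fun i => eq_uE_mul_of_rdc_eq_zero ht (hc i)
  refine ⟨c.sum fun i _ => iot (d i) * Xp ^ i, ?_⟩
  rw [← hP.spoly_coeffs g, spoly, Finsupp.mul_sum]
  exact Finsupp.sum_congr fun i _ => by rw [hd i, map_mul, mul_assoc]

theorem exists_residueHom (ht : 0 < t) {lc : ℕ → Fq p m}
    (hP : IsSkewPolynomialRing (Th p m t theta) iot Xp) (hPf : IsSkewPolynomialRing theta iotf Xf)
    (hpiQ : Function.Surjective piQ)
    (hkerQ : RingHom.ker piQ = Ideal.span {Xp ^ p ^ s - iot (lamOf p m t lc)})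
    (hpif : Function.Surjective pif)
    (hkerf : RingHom.ker pif = Ideal.span {Xf ^ p ^ s - iotf (lc 0)}) :
    ∃ ρ : Q →+* Qf, Function.Surjective ρ ∧ RingHom.ker ρ = Ideal.span {uQ p m t iot piQ} ∧
      ∀ c, ρ (lQ p m t iot Xp piQ c) = lQf p m iotf Xf pif c := by
  obtain ⟨σ, hσ, hσker, hσι, hσX, hσl⟩ := exists_reduction ht hP hPf
  have hσf : σ (Xp ^ p ^ s - iot (lamOf p m t lc)) = Xf ^ p ^ s - iotf (lc 0) := by
    rw [map_sub, map_pow, hσX, hσι, rdc_lamOf]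
  have hle : RingHom.ker piQ ≤ RingHom.ker (pif.comp σ) := by
    rw [hkerQ, Ideal.span_le, Set.singleton_subset_iff, SetLike.mem_coe, RingHom.mem_ker,
      RingHom.comp_apply, hσf, ← RingHom.mem_ker, hkerf]
    exact Ideal.mem_span_singleton_self _
  set ρ := piQ.liftOfSurjective hpiQ ⟨pif.comp σ, hle⟩
  have hρ (g : P) : ρ (piQ g) = pif (σ g) := piQ.liftOfRightInverse_comp_apply _ _ _ g
  refine ⟨ρ, fun y => ?_, le_antisymm (fun z hz => ?_) ?_, fun c => (hρ _).trans (by rw [hσl]; rfl)⟩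
  · obtain ⟨g, rfl⟩ := hpif y
    obtain ⟨h, rfl⟩ := hσ g
    exact ⟨piQ h, hρ h⟩
  · obtain ⟨g, rfl⟩ := hpiQ z
    rw [RingHom.mem_ker, hρ, ← RingHom.mem_ker, hkerf, Ideal.mem_span_singleton'] at hz
    obtain ⟨h, hh⟩ := hz
    obtain ⟨H, rfl⟩ := hσ h
    obtain ⟨g', hg'⟩ := hσker (g - H * (Xp ^ p ^ s - iot (lamOf p m t lc)))
      (by rw [map_sub, map_mul, hσf, hh, sub_self])
    have hf0 : piQ (Xp ^ p ^ s - iot (lamOf p m t lc)) = 0 := by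
      rw [← RingHom.mem_ker, hkerQ]
      exact Ideal.mem_span_singleton_self _
    refine Ideal.mem_span_singleton'.mpr ⟨piQ g', ?_⟩
    rw [← (commute_uQ hP hpiQ _).eq, uQ, ← map_mul, ← hg', map_sub, map_mul, hf0, mul_zero,
      sub_zero]
  · rw [Ideal.span_le, Set.singleton_subset_iff, SetLike.mem_coe, RingHom.mem_ker, uQ, hρ, hσι,
      rdc_uE, map_zero, map_zero]

end Reduction

section Binomial

variable {R A : Type*} [Ring R] [Ring A]

noncomputable def xPowSubC (n : ℕ) (a : R) : ℕ →₀ R :=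
  Finsupp.single n 1 - Finsupp.single 0 a

theorem isMonicOfDegree_xPowSubC {n : ℕ} (hn : 0 < n) (a : R) :
    IsMonicOfDegree (xPowSubC n a) n :=
  ⟨by simp [xPowSubC, hn.ne'], fun i hi => by
    simp [xPowSubC, hi.ne', (hn.trans hi).ne']⟩

theorem spoly_xPowSubC (ι : R →+* A) (X : A) (n : ℕ) (a : R) :
    spoly ι X (xPowSubC n a) = X ^ n - ι a := by
  rw [xPowSubC, ← spolyHom_apply, map_sub, spolyHom_apply, spolyHom_apply, spoly_single,
    spoly_single, map_one, one_mul, pow_zero, mul_one]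

end Binomial

section Frobenius

variable {p m}

theorem pow_pow_sub_mod_pow (hm : 0 < m) (a : Fq p m) (s : ℕ) :
    (a ^ p ^ (m - s % m)) ^ p ^ s = a := by
  have : Fintype (Fq p m) := Fintype.ofFinite _
  have hcard : Fintype.card (Fq p m) = p ^ m := by
    rw [← Nat.card_eq_fintype_card, GaloisField.card p m hm.ne']
  have hexp : m - s % m + s = m * (s / m + 1) := by
    have := Nat.mod_add_div s m
    have := Nat.mod_lt s hm
    rw [Nat.mul_add, mul_one]
    omega
  rw [← pow_mul, ← pow_add, hexp, pow_mul, ← hcard, FiniteField.pow_card_pow]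

theorem C_mul_X_sub_one_pow (hm : 0 < m) {theta : Fq p m ≃+* Fq p m}
    {Pf : Type*} [Ring Pf] {iotf : Fq p m →+* Pf} {Xf : Pf}
    (hPf : IsSkewPolynomialRing theta iotf Xf) {a : Fq p m} (ha : a ≠ 0) (hθa : theta a = a)
    (s : ℕ) :
    (iotf ((a ^ p ^ (m - s % m))⁻¹) * Xf - 1) ^ p ^ s = iotf a⁻¹ * (Xf ^ p ^ s - iotf a) := by
  have := hPf.nontrivial
  have : CharP Pf p := charP_of_injective_ringHom iotf.injective p
  have hθ : theta (a ^ p ^ (m - s % m))⁻¹ = (a ^ p ^ (m - s % m))⁻¹ := by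
    rw [map_inv₀, map_pow, hθa]
  rw [sub_pow_char_pow_of_commute p s (Commute.one_right _), one_pow,
    mul_pow_of_fixed hPf.X_mul hθ, inv_pow, pow_pow_sub_mod_pow hm, mul_sub, ← map_mul,
    inv_mul_cancel₀ ha, map_one]

end Frobenius

section Classification

variable {p m t} {theta : Fq p m ≃+* Fq p m}
  {P : Type*} [Ring P] {iot : Rt p m t →+* P} {Xp : P}
  {Pf : Type*} [Ring Pf] {iotf : Fq p m →+* Pf} {Xf : Pf}
  {Q : Type*} [Ring Q] {piQ : P →+* Q} {Qf : Type*} [Ring Qf] {pif : Pf →+* Qf}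
  {ρ : Q →+* Qf}

local notation "𝔲" => uQ p m t iot piQ
local notation "ℓ" => lQ p m t iot Xp piQ

theorem rdvdC_of_mem (hρ : Function.Surjective ρ) (hu : ∀ z, Commute 𝔲 z)
    (hker : RingHom.ker ρ = Ideal.span {𝔲}) (hρl : ∀ c, ρ (ℓ c) = lQf p m iotf Xf pif c)
    {J : Ideal Q} {e : ℕ} {b : ℕ →₀ Fq p m}
    (hJb : torsionIdeal ρ 𝔲 J e = Ideal.span {lQf p m iotf Xf pif b}) {c : ℕ →₀ Fq p m} {g : Q}
    (hc : 𝔲 ^ e * ℓ c + 𝔲 ^ (e + 1) * g ∈ J) : RDvdC p m iotf Xf pif b c := by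
  have hρu : ρ 𝔲 = 0 := RingHom.mem_ker.mp (hker ▸ Ideal.mem_span_singleton_self _)
  have hmem : lQf p m iotf Xf pif c ∈ torsionIdeal ρ 𝔲 J e := by
    refine (mem_torsionIdeal hρ hu).mpr ⟨ℓ c + 𝔲 * g, ?_, ?_⟩
    · rwa [mul_add, ← mul_assoc, ← pow_succ]
    · rw [map_add, map_mul, hρu, zero_mul, add_zero, hρl]
  obtain ⟨a, ha⟩ := Ideal.mem_span_singleton'.mp (hJb ▸ hmem)
  exact ⟨a, ha.symm⟩

theorem exists_torsion_generator (hρ : Function.Surjective ρ) (hu : ∀ z, Commute 𝔲 z)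
    (hker : RingHom.ker ρ = Ideal.span {𝔲}) (hρl : ∀ c, ρ (ℓ c) = lQf p m iotf Xf pif c)
    (hPf : IsSkewPolynomialRing theta iotf Xf) (hpif : Function.Surjective pif)
    {f : ℕ →₀ Fq p m} {D : ℕ} (hf : IsMonicOfDegree f D)
    (hkerf : RingHom.ker pif = Ideal.span {spoly iotf Xf f}) {w : Pf}
    (hw : ∃ k, w = k * spoly iotf Xf f) {J : Ideal Q} {e : ℕ}
    (he : torsionIdeal ρ 𝔲 J e ≠ ⊥) :
    ∃ b g, InB p m iotf Xf w D b ∧ 𝔲 ^ e * (ℓ b - 𝔲 * g) ∈ J ∧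
      torsionIdeal ρ 𝔲 J e = Ideal.span {lQf p m iotf Xf pif b} := by
  obtain ⟨b, hbD, ⟨h, hh⟩, hJb⟩ := exists_span_eq_of_ne_bot hPf hf hpif hkerf he
  have hb : lQf p m iotf Xf pif b ∈ torsionIdeal ρ 𝔲 J e := by
    rw [hJb]
    exact Ideal.mem_span_singleton_self _
  obtain ⟨y, hy, hρy⟩ := (mem_torsionIdeal hρ hu).mp hb
  have hby : ℓ b - y ∈ Ideal.span {𝔲} := by
    rw [← hker, RingHom.mem_ker, map_sub, hρl, hρy, sub_self]
  obtain ⟨g, hg⟩ := Ideal.mem_span_singleton'.mp hby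
  obtain ⟨k, rfl⟩ := hw
  refine ⟨b, g, ⟨hbD, k * h, by rw [hh, mul_assoc]⟩, ?_, hJb⟩
  rwa [(hu g).eq, hg, sub_sub_cancel]

theorem exists_eq_span_torsion_generators (hρ : Function.Surjective ρ) (hu : ∀ z, Commute 𝔲 z)
    (hker : RingHom.ker ρ = Ideal.span {𝔲}) (hρl : ∀ c, ρ (ℓ c) = lQf p m iotf Xf pif c)
    (hPf : IsSkewPolynomialRing theta iotf Xf) (hpif : Function.Surjective pif)
    {f : ℕ →₀ Fq p m} {D : ℕ} (hf : IsMonicOfDegree f D)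
    (hkerf : RingHom.ker pif = Ideal.span {spoly iotf Xf f}) {w : Pf}
    (hw : ∃ k, w = k * spoly iotf Xf f) {J : Ideal Q} (hJ : J ≠ ⊥) :
    ∃ e₀ < t, (e₀ = 0 ↔ ¬J ≤ Ideal.span {𝔲}) ∧ ∃ (b : ℕ → ℕ →₀ Fq p m) (g : ℕ → Q),
      J = Submodule.span Q ((fun e => 𝔲 ^ e * (ℓ (b e) - 𝔲 * g e)) '' Set.Ico e₀ t) ∧
      ∀ e, e₀ ≤ e → e < t → InB p m iotf Xf w D (b e) ∧ 𝔲 ^ e * (ℓ (b e) - 𝔲 * g e) ∈ J ∧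
        ∀ c g', 𝔲 ^ e * ℓ c + 𝔲 ^ (e + 1) * g' ∈ J → RDvdC p m iotf Xf pif (b e) c := by
  obtain ⟨e₀, he₀, hiff⟩ := exists_forall_torsionIdeal_ne_bot_iff hρ hu hker uQ_pow_t hJ
  choose! b g hgen using fun e (he : torsionIdeal ρ 𝔲 J e ≠ ⊥) =>
    exists_torsion_generator hρ hu hker hρl hPf hpif hf hkerf hw he
  have hρu : ρ 𝔲 = 0 := RingHom.mem_ker.mp (hker ▸ Ideal.mem_span_singleton_self _)
  refine ⟨e₀, he₀, ?_, b, g, eq_span_of_torsionIdeal hρ hu hker uQ_pow_t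
    (fun e he => (hgen e ((hiff e).mpr he.1)).2.1) fun e het hne => ⟨⟨(hiff e).mp hne, het⟩, ?_⟩,
    fun e he₁ het => ?_⟩
  · rw [← torsionIdeal_zero_eq_bot_iff hker, ← ne_eq, hiff, Nat.le_zero, eq_comm]
  · rw [(hgen e hne).2.2, map_sub, map_mul, hρu, zero_mul, sub_zero, hρl]
  · obtain ⟨hB, hJ, hJb⟩ := hgen e ((hiff e).mpr he₁)
    exact ⟨hB, hJ, fun c g' => rdvdC_of_mem hρ hu hker hρl hJb⟩

theorem typeTwo_span_Ico {w : Pf} {D e₁ : ℕ} (he₁ : 1 ≤ e₁) {J : Ideal Q}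
    {b : ℕ → ℕ →₀ Fq p m} {g : ℕ → Q}
    (h : ∀ e, e₁ ≤ e → e < t → InB p m iotf Xf w D (b e) ∧ 𝔲 ^ e * (ℓ (b e) - 𝔲 * g e) ∈ J ∧
      ∀ c g', 𝔲 ^ e * ℓ c + 𝔲 ^ (e + 1) * g' ∈ J → RDvdC p m iotf Xf pif (b e) c) :
    TypeTwo p m t iot Xp piQ iotf Xf pif w D
      (Submodule.span Q ((fun e => 𝔲 ^ e * (ℓ (b e) - 𝔲 * g e)) '' Set.Ico e₁ t)) := by
  set gen := fun e => 𝔲 ^ e * (ℓ (b e) - 𝔲 * g e)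
  -- generator `j` sits at level `t - 1 - j`
  have hlev (j : Fin (t - e₁)) : e₁ ≤ t - 1 - j ∧ t - 1 - j < t := by omega
  have hgen : (fun j : Fin (t - e₁) =>
      𝔲 ^ (t - 1 - j) * ℓ (b (t - 1 - j)) - 𝔲 ^ (t - j) * g (t - 1 - j))
        = fun j : Fin (t - e₁) => gen (t - 1 - j) := by
    funext j
    rw [show t - (j : ℕ) = t - 1 - j + 1 by omega, pow_succ, mul_assoc, ← mul_sub]
  have hrange : Set.range (fun j : Fin (t - e₁) => gen (t - 1 - j)) = gen '' Set.Ico e₁ t := by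
    rw [Set.range_comp' gen]
    congr 1
    ext e
    refine ⟨fun ⟨j, hj⟩ => hj ▸ hlev j, fun he => ⟨⟨t - 1 - e, ?_⟩, ?_⟩⟩
    · simp only [Set.mem_Ico] at he
      omega
    · show t - 1 - (t - 1 - e) = e
      simp only [Set.mem_Ico] at he
      omega
  have hspanJ : Submodule.span Q (gen '' Set.Ico e₁ t) ≤ J := by
    rw [Submodule.span_le]
    rintro _ ⟨e, he, rfl⟩
    exact (h e he.1 he.2).2.1
  refine ⟨t - e₁, fun j => j, fun j => b (t - 1 - j), fun j => g (t - 1 - j),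
    Fin.val_strictMono, fun j => show (j : ℕ) ≤ t - 2 by omega,
    fun j => (h _ (hlev j).1 (hlev j).2).1, ?_, ?_⟩
  · rw [hgen, hrange]
  · intro j k _ c g' hc
    refine (h _ (hlev j).1 (hlev j).2).2.2 c g' ?_
    rw [show t - 1 - (j : ℕ) + 1 = t - j by omega]
    refine hspanJ (Submodule.span_mono ?_ hc)
    rw [hgen, ← hrange]
    exact Set.image_subset_range _ _

end Classification

theorem statement7_general (p m t s : ℕ) [Fact p.Prime] (hm : 0 < m) (ht : 0 < t)
    (theta : Fq p m ≃+* Fq p m)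
    (lc : ℕ → Fq p m) (hl0 : lc 0 ≠ 0)
    (hTlam : Th p m t theta (lamOf p m t lc) = lamOf p m t lc)
    {P : Type*} [Ring P] (iot : Rt p m t →+* P) (Xp : P)
    (hXiot : ∀ r, Xp * iot r = iot (Th p m t theta r) * Xp)
    (hPrep : ∀ g : P, ∃! c : ℕ →₀ Rt p m t, g = spoly iot Xp c)
    {Pf : Type*} [Ring Pf] (iotf : Fq p m →+* Pf) (Xf : Pf)
    (hXiotf : ∀ a, Xf * iotf a = iotf (theta a) * Xf)
    (hPfrep : ∀ g : Pf, ∃! c : ℕ →₀ Fq p m, g = spoly iotf Xf c)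
    {Q : Type*} [Ring Q] (piQ : P →+* Q) (hpiQ : Function.Surjective piQ)
    (hkerQ : RingHom.ker piQ = Ideal.span {Xp ^ p ^ s - iot (lamOf p m t lc)})
    {Qf : Type*} [Ring Qf] (pif : Pf →+* Qf) (hpif : Function.Surjective pif)
    (hkerf : RingHom.ker pif = Ideal.span {Xf ^ p ^ s - iotf (lc 0)})
    :
    ∀ J : Ideal Q,
      J = ⊥ ∨ J = ⊤ ∨
      (J ≠ ⊥ ∧ J ≤ Ideal.span {uQ p m t iot piQ} ∧
        TypeTwo p m t iot Xp piQ iotf Xf pif ((iotf ((lc 0 ^ p ^ (m - s % m))⁻¹) * Xf - 1) ^ p ^ s) (p ^ s) J) ∨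
      (J ≠ ⊤ ∧ ¬J ≤ Ideal.span {uQ p m t iot piQ} ∧
        ∃ (bc : ℕ →₀ Fq p m) (g : Q) (I : Ideal Q),
          InB p m iotf Xf ((iotf ((lc 0 ^ p ^ (m - s % m))⁻¹) * Xf - 1) ^ p ^ s) (p ^ s) bc ∧
          TypeTwo p m t iot Xp piQ iotf Xf pif ((iotf ((lc 0 ^ p ^ (m - s % m))⁻¹) * Xf - 1) ^ p ^ s) (p ^ s) I ∧
          J = Submodule.span Q {lQ p m t iot Xp piQ bc + uQ p m t iot piQ * g} ⊔ I) := by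
  intro J
  have hP : IsSkewPolynomialRing (Th p m t theta) iot Xp := ⟨hXiot, hPrep⟩
  have hPf : IsSkewPolynomialRing theta iotf Xf := ⟨hXiotf, hPfrep⟩
  obtain ⟨ρ, hρ, hker, hρl⟩ := exists_residueHom ht hP hPf hpiQ hkerQ hpif hkerf
  rw [← spoly_xPowSubC] at hkerf
  have hw := C_mul_X_sub_one_pow hm hPf hl0 (theta_lc_zero theta ht hTlam) s
  rw [← spoly_xPowSubC] at hw
  rcases eq_or_ne J ⊥ with hJ | hJ
  · exact Or.inl hJ
  obtain ⟨e₀, he₀t, he₀, b, g, hJspan, hgen⟩ := exists_eq_span_torsion_generators hρ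
    (commute_uQ hP hpiQ) hker hρl hPf hpif
    (isMonicOfDegree_xPowSubC (pow_pos (Fact.out : p.Prime).pos s) (lc 0)) hkerf ⟨_, hw⟩ hJ
  by_cases hJu : J ≤ Ideal.span {uQ p m t iot piQ}
  · have he₀1 : 1 ≤ e₀ := Nat.one_le_iff_ne_zero.mpr fun h => he₀.mp h hJu
    exact Or.inr (Or.inr (Or.inl ⟨hJ, hJu, hJspan ▸ typeTwo_span_Ico he₀1 hgen⟩))
  rcases eq_or_ne J ⊤ with hJt | hJt
  · exact Or.inr (Or.inl hJt)
  obtain rfl := he₀.mpr hJu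
  refine Or.inr (Or.inr (Or.inr ⟨hJt, hJu, b 0, -g 0, _, (hgen 0 le_rfl ht).1,
    typeTwo_span_Ico le_rfl fun e _ het => hgen e (Nat.zero_le e) het, ?_⟩))
  have hIco : Set.Ico 0 t = insert 0 (Set.Ico 1 t) := by
    ext e
    simp only [Set.mem_Ico, Set.mem_insert_iff]
    omega
  rw [hJspan, hIco, Set.image_insert_eq, Submodule.span_insert, pow_zero, one_mul, mul_neg,
    ← sub_eq_add_neg]

/-- Classification of the left ideals of `R^{t,x^{p^s}-λ}_Θ`. -/
theorem statement7 (p m t s : ℕ) [Fact p.Prime] (hm : 0 < m) (ht : 0 < t) (hs : 0 < s)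
    (theta : Fq p m ≃+* Fq p m)
    (lc : ℕ → Fq p m) (hl0 : lc 0 ≠ 0)
    (hTlam : Th p m t theta (lamOf p m t lc) = lamOf p m t lc)
    (hord : thOrder p m t theta ∣ p ^ s)
    {P : Type*} [Ring P] (iot : Rt p m t →+* P) (Xp : P)
    (hXiot : ∀ r, Xp * iot r = iot (Th p m t theta r) * Xp)
    (hPrep : ∀ g : P, ∃! c : ℕ →₀ Rt p m t, g = spoly iot Xp c)
    {Pf : Type*} [Ring Pf] (iotf : Fq p m →+* Pf) (Xf : Pf)
    (hXiotf : ∀ a, Xf * iotf a = iotf (theta a) * Xf)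
    (hPfrep : ∀ g : Pf, ∃! c : ℕ →₀ Fq p m, g = spoly iotf Xf c)
    {Q : Type*} [Ring Q] (piQ : P →+* Q) (hpiQ : Function.Surjective piQ)
    (hkerQ : RingHom.ker piQ = Ideal.span {Xp ^ p ^ s - iot (lamOf p m t lc)})
    {Qf : Type*} [Ring Qf] (pif : Pf →+* Qf) (hpif : Function.Surjective pif)
    (hkerf : RingHom.ker pif = Ideal.span {Xf ^ p ^ s - iotf (lc 0)})
    :
    ∀ J : Ideal Q,
      J = ⊥ ∨ J = ⊤ ∨
      (J ≠ ⊥ ∧ J ≤ Ideal.span {uQ p m t iot piQ} ∧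
        TypeTwo p m t iot Xp piQ iotf Xf pif ((iotf ((lc 0 ^ p ^ (m - s % m))⁻¹) * Xf - 1) ^ p ^ s) (p ^ s) J) ∨
      (J ≠ ⊤ ∧ ¬J ≤ Ideal.span {uQ p m t iot piQ} ∧
        ∃ (bc : ℕ →₀ Fq p m) (g : Q) (I : Ideal Q),
          InB p m iotf Xf ((iotf ((lc 0 ^ p ^ (m - s % m))⁻¹) * Xf - 1) ^ p ^ s) (p ^ s) bc ∧
          TypeTwo p m t iot Xp piQ iotf Xf pif ((iotf ((lc 0 ^ p ^ (m - s % m))⁻¹) * Xf - 1) ^ p ^ s) (p ^ s) I ∧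
          J = Submodule.span Q {lQ p m t iot Xp piQ bc + uQ p m t iot piQ * g} ⊔ I) :=
  statement7_general p m t s hm ht theta lc hl0 hTlam iot Xp hXiot hPrep iotf Xf hXiotf hPfrep piQ
    hpiQ hkerQ pif hpif hkerf

end SkewPaper
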